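/- arXiv:1905.07035 — 3 statements merged into one kernel-verified Lean document; each statement's English description precedes it below -/
import Mathlib

section
/- Let $A_1,\dots,A_n$ be $d\times d$ real matrices and let $f = \det(I_d + x_1A_1 + \cdots + x_nA_n) \in \mathbb{R}[x_1,\dots,x_n]$. For any nonnegative integers $k_1,\dots,k_n$ with $k := k_1+\cdots+k_n \le d$, the coefficient of the monomial $x_1^{k_1}\cdots x_n^{k_n}$ in $f$ equals $\sum_{\alpha}\sum_{\sigma} \det M(\alpha,\sigma)$, where the first sum is over all strictly increasing tuples $1 \le \alpha_1 < \alpha_2 < \cdots < \alpha_k \le d$, the second sum is over all functions $\sigma : \{1,\dots,k\} \to \{1,\dots,n\}$ such that $|\sigma^{-1}(i)| = k_i$ for each $i = 1,\dots,n$, and $M(\alpha,\sigma)$ is the $k\times k$ matrix whose $(p,q)$ entry is the $(\alpha_p,\alpha_q)$ entry of $A_{\sigma(p)}$. -/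
/-!
Write each row of `I + ∑ₗ xₗ Aₗ` as `eᵢ + ∑ₗ xₗ (Aₗ)ᵢ` and expand the determinant
multilinearly: it becomes a sum over all `r : Fin d → Option (Fin n)` of
`(∏ᵢ x_{r i}) · det W_r`, where row `i` of `W_r` is row `i` of the identity when `r i = none` and
row `i` of `A_l` when `r i = some l`. The monomial `x^k` collects the `r` having exactly `kₗ` rows
labelled `l`. Such an `r` is the same thing as the increasing enumeration `α` of its labelled rows
together with the labelling `σ` of those rows, and since `W_r` agrees with the identity outside the
rows `α`, its determinant is the principal minor `det M(α, σ)`.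
-/

open MvPolynomial Finset Function

lemma Matrix.det_eq_det_submatrix_of_row_eq_one {R m κ : Type*} [CommRing R] [Fintype m]
    [DecidableEq m] [Fintype κ] [DecidableEq κ] {α : κ → m} (hα : Injective α)
    (N : Matrix m m R) (hN : ∀ i ∉ Set.range α, N i = (1 : Matrix m m R) i) :
    N.det = (N.submatrix α α).det := by
  set s : Finset m := univ.image α
  have hpiecewise : N = Matrix.of (s.piecewise N.row (1 : Matrix m m R).row) := by
    refine Matrix.ext fun i j => ?_
    by_cases hi : i ∈ s
    · simp [hi]
    · rw [congrFun (hN i fun ⟨p, hp⟩ => hi (hp ▸ mem_image_of_mem α (mem_univ p))) j]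
      simp [hi]
  let e : κ ≃ s := Equiv.ofBijective (fun p => ⟨α p, mem_image_of_mem α (mem_univ p)⟩)
    ⟨fun p q h => hα (congrArg Subtype.val h), fun ⟨i, hi⟩ => by
      obtain ⟨p, -, rfl⟩ := mem_image.mp hi
      exact ⟨p, rfl⟩⟩
  calc N.det = (N.submatrix (↑) (↑) : Matrix s s R).det := by
        conv_lhs => rw [hpiecewise]
        exact Matrix.det_piecewise_one_eq_submatrix_det N s
    _ = (N.submatrix α α).det := (Matrix.det_submatrix_equiv_self e _).symm

section ExtendByNone

variable {m κ ι : Type*}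

noncomputable def extendByNone (α : κ → m) (σ : κ → ι) : m → Option ι :=
  extend α (some ∘ σ) fun _ => none

lemma extendByNone_apply {α : κ → m} (hα : Injective α) (σ : κ → ι) (p : κ) :
    extendByNone α σ (α p) = some (σ p) :=
  hα.extend_apply _ _ p

lemma extendByNone_eq_none_iff {α : κ → m} (hα : Injective α) (σ : κ → ι) (i : m) :
    extendByNone α σ i = none ↔ i ∉ Set.range α := by
  constructor
  · rintro h ⟨p, rfl⟩
    simp [extendByNone_apply hα] at h
  · exact fun h => extend_apply' _ _ _ h

lemma card_extendByNone_eq_some [Fintype m] [Fintype κ] [DecidableEq ι] {α : κ → m}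
    (hα : Injective α) (σ : κ → ι) (l : ι) :
    #{i | extendByNone α σ i = some l} = #{p | σ p = l} := by
  classical
  rw [← card_image_of_injective _ hα]
  congr 1
  ext i
  by_cases hi : i ∈ Set.range α
  · obtain ⟨p, rfl⟩ := hi
    simp [extendByNone_apply hα, hα.eq_iff]
  · have hnone := (extendByNone_eq_none_iff hα σ i).mpr hi
    simp only [mem_filter, mem_univ, true_and, mem_image, hnone, reduceCtorEq, false_iff]
    rintro ⟨p, -, rfl⟩
    exact hi ⟨p, rfl⟩

lemma range_eq_of_extendByNone_eq {α β : κ → m} (hα : Injective α) (hβ : Injective β)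
    {σ τ : κ → ι} (h : extendByNone α σ = extendByNone β τ) : Set.range α = Set.range β := by
  ext i
  rw [← not_iff_not, ← extendByNone_eq_none_iff hα σ, ← extendByNone_eq_none_iff hβ τ, h]

lemma extendByNone_inj_of_strictMono [LinearOrder m] {K : ℕ} {α β : Fin K → m}
    (hα : StrictMono α) (hβ : StrictMono β) {σ τ : Fin K → ι}
    (h : extendByNone α σ = extendByNone β τ) : α = β ∧ σ = τ := by
  obtain rfl := (hα.range_inj hβ).mp (range_eq_of_extendByNone_eq hα.injective hβ.injective h)
  refine ⟨rfl, funext fun p => Option.some_injective _ ?_⟩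
  rw [← extendByNone_apply hα.injective, h, extendByNone_apply hα.injective]

lemma exists_strictMono_extendByNone_eq [Fintype m] [LinearOrder m] {K : ℕ} (r : m → Option ι)
    (hr : #{i | r i ≠ none} = K) :
    ∃ α : Fin K → m, StrictMono α ∧ ∃ σ, extendByNone α σ = r := by
  set α := orderEmbOfFin _ hr
  have hsome : ∀ p, ∃ l, r (α p) = some l := fun p =>
    Option.ne_none_iff_exists'.mp (mem_filter.mp (orderEmbOfFin_mem _ hr p)).2
  choose σ hσ using hsome
  refine ⟨α, α.strictMono, σ, funext fun i => ?_⟩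
  by_cases hi : i ∈ Set.range α
  · obtain ⟨p, rfl⟩ := hi
    rw [extendByNone_apply α.injective, hσ]
  · rw [(extendByNone_eq_none_iff α.injective σ i).mpr hi]
    rw [range_orderEmbOfFin] at hi
    simpa [eq_comm] using hi

lemma card_ne_none_eq_sum [Fintype m] [Fintype ι] [DecidableEq ι] (r : m → Option ι) :
    #{i | r i ≠ none} = ∑ l, #{i | r i = some l} := by
  simp only [card_filter]
  rw [sum_comm]
  refine sum_congr rfl fun i _ => ?_
  cases r i <;> simp

open scoped Classical in
lemma sum_filter_card_eq_sum_strictMono {M : Type*} [AddCommMonoid M] [Fintype m] [LinearOrder m]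
    [Fintype ι] [DecidableEq ι] (k : ι → ℕ) (f : (m → Option ι) → M) :
    ∑ r : m → Option ι with ∀ l, #{i | r i = some l} = k l, f r =
      ∑ α : Fin (∑ l, k l) → m with StrictMono α,
        ∑ σ : Fin (∑ l, k l) → ι with ∀ l, #{p | σ p = l} = k l, f (extendByNone α σ) := by
  rw [← sum_product']
  symm
  refine sum_nbij (fun x => extendByNone x.1 x.2) ?_ ?_ ?_ fun _ _ => rfl
  · rintro ⟨α, σ⟩ h
    simp only [mem_product, mem_filter, mem_univ, true_and] at h ⊢
    intro l
    rw [card_extendByNone_eq_some h.1.injective]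
    exact h.2 l
  · rintro ⟨α, σ⟩ h ⟨β, τ⟩ h' heq
    simp only [coe_product, coe_filter, mem_univ, true_and, Set.mem_prod] at h h'
    obtain ⟨rfl, rfl⟩ := extendByNone_inj_of_strictMono h.1 h'.1 heq
    rfl
  · intro r hr
    simp only [coe_filter, mem_univ, true_and] at hr
    have hcard : #{i | r i ≠ none} = ∑ l, k l := by
      rw [card_ne_none_eq_sum]
      exact sum_congr rfl fun l _ => hr l
    obtain ⟨α, hα, σ, rfl⟩ := exists_strictMono_extendByNone_eq r hcard
    refine ⟨(α, σ), ?_, rfl⟩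
    simp only [coe_product, coe_filter, mem_univ, true_and, Set.mem_prod]
    refine ⟨hα, fun l => ?_⟩
    rw [← card_extendByNone_eq_some hα.injective]
    exact hr l

end ExtendByNone

section RowDegree

variable {m ι : Type*} [Fintype m]

noncomputable def rowDegree (r : m → Option ι) : ι →₀ ℕ :=
  ∑ i, (r i).elim 0 fun l => Finsupp.single l 1

variable [DecidableEq ι]

lemma rowDegree_apply (r : m → Option ι) (l : ι) : rowDegree r l = #{i | r i = some l} := by
  rw [rowDegree, Finsupp.finsetSum_apply, card_filter]
  refine sum_congr rfl fun i _ => ?_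
  cases r i <;> simp [Finsupp.single_apply, eq_comm]

lemma rowDegree_eq_equivFunOnFinite_symm_iff [Finite ι] (r : m → Option ι) (k : ι → ℕ) :
    rowDegree r = Finsupp.equivFunOnFinite.symm k ↔ ∀ l, #{i | r i = some l} = k l := by
  simp [Finsupp.ext_iff, rowDegree_apply]

end RowDegree

section RowMix

variable {m ι R : Type*} [Fintype m] [DecidableEq m] [CommRing R]

def rowMix (A : ι → Matrix m m R) (r : m → Option ι) : Matrix m m R :=
  Matrix.of fun i => (r i).elim 1 A i

lemma det_one_add_sum_X_smul [Fintype ι] (A : ι → Matrix m m R) :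
    (1 + ∑ l, (X l : MvPolynomial ι R) • (A l).map C).det =
      ∑ r : m → Option ι, monomial (rowDegree r) (rowMix A r).det := by
  let c : Option ι → MvPolynomial ι R := fun t => t.elim 1 X
  let B : Option ι → Matrix m m R := fun t => t.elim 1 A
  have hrows : (1 + ∑ l, (X l : MvPolynomial ι R) • (A l).map C) =
      Matrix.of fun i => ∑ t, c t • ((B t).map C : Matrix m m (MvPolynomial ι R)) i := by
    refine Matrix.ext fun i j => ?_
    simp [Fintype.sum_option, c, B, Matrix.sum_apply, Matrix.one_apply]
  rw [Matrix.det, hrows]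
  refine (Matrix.detRowAlternating.toMultilinearMap.map_sum _).trans
    (sum_congr rfl fun r _ => ?_)
  have hmonomial : ∏ i, c (r i) = monomial (rowDegree r) 1 := by
    rw [rowDegree, monomial_sum_one]
    refine prod_congr rfl fun i _ => ?_
    cases r i <;> rfl
  have hdet : Matrix.detRowAlternating
      (fun i => ((B (r i)).map C : Matrix m m (MvPolynomial ι R)) i) = C (rowMix A r).det :=
    (RingHom.map_det C (rowMix A r)).symm
  rw [MultilinearMap.map_smul_univ, hmonomial, AlternatingMap.coe_multilinearMap, hdet,
    smul_eq_mul, mul_comm, C_mul_monomial, mul_one]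

lemma coeff_det_one_add_sum_X_smul [Fintype ι] [DecidableEq ι] (A : ι → Matrix m m R)
    (k : ι → ℕ) :
    coeff (Finsupp.equivFunOnFinite.symm k) (1 + ∑ l, (X l : MvPolynomial ι R) • (A l).map C).det =
      ∑ r : m → Option ι with ∀ l, #{i | r i = some l} = k l, (rowMix A r).det := by
  rw [det_one_add_sum_X_smul, coeff_sum, sum_filter]
  refine sum_congr rfl fun r _ => ?_
  simp only [coeff_monomial, rowDegree_eq_equivFunOnFinite_symm_iff]

lemma det_rowMix_extendByNone {κ : Type*} [Fintype κ] [DecidableEq κ] (A : ι → Matrix m m R)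
    {α : κ → m} (hα : Injective α) (σ : κ → ι) :
    (rowMix A (extendByNone α σ)).det = (Matrix.of fun p q => A (σ p) (α p) (α q)).det := by
  rw [Matrix.det_eq_det_submatrix_of_row_eq_one hα]
  · congr 1
    ext p q
    simp [rowMix, extendByNone_apply hα]
  · intro i hi
    show (extendByNone α σ i).elim 1 A i = _
    rw [(extendByNone_eq_none_iff hα σ i).mpr hi]
    rfl

end RowMix

open scoped Classical

theorem coeff_det_eq_generalizedMixedDiscriminant_general
    (n d : ℕ) (A : Fin n → Matrix (Fin d) (Fin d) ℝ)
    (k : Fin n → ℕ) :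
    MvPolynomial.coeff (Finsupp.equivFunOnFinite.symm k)
      (Matrix.det ((1 : Matrix (Fin d) (Fin d) (MvPolynomial (Fin n) ℝ)) +
        ∑ i, (MvPolynomial.X i : MvPolynomial (Fin n) ℝ) • (A i).map MvPolynomial.C)) =
    ∑ α ∈ Finset.univ.filter (fun α : Fin (∑ i, k i) → Fin d => StrictMono α),
      ∑ σ ∈ Finset.univ.filter (fun σ : Fin (∑ i, k i) → Fin n =>
          ∀ i, (Finset.univ.filter (fun p => σ p = i)).card = k i),
        Matrix.det (Matrix.of fun p q : Fin (∑ i, k i) => A (σ p) (α p) (α q)) := by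
  rw [coeff_det_one_add_sum_X_smul, sum_filter_card_eq_sum_strictMono]
  -- the inner filters differ only in their `Decidable` instances
  exact sum_congr rfl fun α hα => sum_congr (by congr) fun σ _ =>
    det_rowMix_extendByNone A (mem_filter.mp hα).2.injective σ

/-- Theorem 3.2 (generalized mixed discriminant formula for coefficients of a
determinantal polynomial): the coefficient of `x₁^{k₁} ⋯ xₙ^{kₙ}` in
`det(I_d + x₁A₁ + ⋯ + xₙAₙ)` equals the generalized mixed discriminant
`∑_α ∑_σ det M(α,σ)`. -/
theorem coeff_det_eq_generalizedMixedDiscriminant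
    (n d : ℕ) (A : Fin n → Matrix (Fin d) (Fin d) ℝ)
    (k : Fin n → ℕ) (hk : ∑ i, k i ≤ d) :
    MvPolynomial.coeff (Finsupp.equivFunOnFinite.symm k)
      (Matrix.det ((1 : Matrix (Fin d) (Fin d) (MvPolynomial (Fin n) ℝ)) +
        ∑ i, (MvPolynomial.X i : MvPolynomial (Fin n) ℝ) • (A i).map MvPolynomial.C)) =
    ∑ α ∈ Finset.univ.filter (fun α : Fin (∑ i, k i) → Fin d => StrictMono α),
      ∑ σ ∈ Finset.univ.filter (fun σ : Fin (∑ i, k i) → Fin n =>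
          ∀ i, (Finset.univ.filter (fun p => σ p = i)).card = k i),
        Matrix.det (Matrix.of fun p q : Fin (∑ i, k i) => A (σ p) (α p) (α q)) :=
  coeff_det_eq_generalizedMixedDiscriminant_general n d A k
end

section
/- Let $A$ be a real symmetric negative semidefinite $n\times n$ matrix and $b \in \mathbb{R}^n$. Then the quadratic polynomial $f(x) = x^TAx + b^Tx + 1$ admits a monic symmetric determinantal representation of size at most $n+1$: there exist some $m \le n+1$ and real symmetric $m\times m$ matrices $A_1,\dots,A_n$ with $f = \det(I_m + x_1A_1 + \cdots + x_nA_n)$. -/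
/-!
Factor `-A = Sᵀ * S`. Putting `ℓ = S x`, the matrix `I + ∑ xᵢ Bᵢ` with `Bᵢ` the arrowhead matrix
bordering `0` by the `i`-th column of `S` and the corner `bᵢ` is `[[I, ℓ], [ℓᵀ, 1 + bᵀx]]`, whose
determinant is the Schur complement `1 + bᵀx - ℓᵀℓ = 1 + bᵀx + xᵀAx`.
-/

open MvPolynomial Matrix

open scoped ComplexOrder in
theorem Matrix.PosSemidef.exists_eq_conjTranspose_mul_self {𝕜 n : Type*} [RCLike 𝕜]
    [Fintype n] {P : Matrix n n 𝕜} (hP : P.PosSemidef) : ∃ S : Matrix n n 𝕜, P = Sᴴ * S := by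
  classical
  open scoped MatrixOrder in
  exact CStarAlgebra.nonneg_iff_eq_star_mul_self.mp hP.nonneg

namespace Matrix

variable {R κ σ : Type*} [CommRing R]

theorem dotProduct_mulVec_self_eq_sum_sum [Fintype σ] (M : Matrix σ σ R) (x : σ → R) :
    x ⬝ᵥ M *ᵥ x = ∑ i, ∑ j, M i j * x i * x j := by
  simp only [dotProduct, mulVec, Finset.mul_sum]
  exact Finset.sum_congr rfl fun i _ => Finset.sum_congr rfl fun j _ => by ring

theorem mulVec_dotProduct_mulVec_self [Fintype κ] [Fintype σ] (S : Matrix κ σ R) (x : σ → R) :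
    S *ᵥ x ⬝ᵥ S *ᵥ x = x ⬝ᵥ (Sᵀ * S) *ᵥ x := by
  rw [← mulVec_mulVec, dotProduct_mulVec x, vecMul_transpose]

def arrowhead (v : κ → R) (c : R) : Matrix (κ ⊕ Fin 1) (κ ⊕ Fin 1) R :=
  fromBlocks 0 (replicateCol (Fin 1) v) (replicateRow (Fin 1) v) (of fun _ _ => c)

theorem isSymm_arrowhead (v : κ → R) (c : R) : (arrowhead v c).IsSymm := by
  rw [arrowhead, IsSymm, fromBlocks_transpose, transpose_replicateCol, transpose_replicateRow,
    transpose_zero]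
  rfl

theorem det_one_add_arrowhead [Fintype κ] [DecidableEq κ] (v : κ → R) (c : R) :
    (1 + arrowhead v c).det = 1 + c - v ⬝ᵥ v := by
  rw [arrowhead, ← fromBlocks_one, fromBlocks_add, add_zero, zero_add, zero_add,
    det_fromBlocks_one₁₁, det_unique]
  simp [mul_apply, dotProduct]

theorem one_add_sum_X_smul_arrowhead_map [Fintype σ] [DecidableEq κ] (S : Matrix κ σ R)
    (b : σ → R) :
    1 + ∑ i, (X i : MvPolynomial σ R) • (arrowhead (Sᵀ i) (b i)).map C =
      1 + arrowhead (S.map C *ᵥ X) (∑ i, C (b i) * X i) := by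
  ext (k | k) (l | l) <;>
    simp [arrowhead, sum_apply, one_apply, mulVec, dotProduct, mul_comm, Fin.eq_zero]

theorem det_one_add_sum_X_smul_reindex {ι ι' : Type*} [Fintype σ] [Fintype ι] [DecidableEq ι]
    [Fintype ι'] [DecidableEq ι'] (e : ι ≃ ι') (B : σ → Matrix ι ι R) :
    (1 + ∑ i, (X i : MvPolynomial σ R) • (reindex e e (B i)).map (C (σ := σ))).det =
      (1 + ∑ i, (X i : MvPolynomial σ R) • (B i).map C).det := by
  rw [← det_reindex_self e]
  congr 1
  ext k l
  simp [sum_apply, one_apply]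

end Matrix

/-- If `A` is symmetric negative semidefinite, then the quadratic
`f(x) = xᵀAx + bᵀx + 1` admits a monic symmetric determinantal representation
of size at most `n + 1`. -/
theorem quadratic_msdr_size_le (n : ℕ) (A : Matrix (Fin n) (Fin n) ℝ) (hA : A.IsSymm)
    (hNSD : ∀ v : Fin n → ℝ, dotProduct v (A.mulVec v) ≤ 0)
    (b : Fin n → ℝ) :
    ∃ m : ℕ, m ≤ n + 1 ∧ ∃ B : Fin n → Matrix (Fin m) (Fin m) ℝ,
      (∀ i, (B i).IsSymm) ∧
      ((∑ i, ∑ j, C (A i j) * X i * X j) + (∑ i, C (b i) * X i) + 1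
        : MvPolynomial (Fin n) ℝ) =
      Matrix.det ((1 : Matrix (Fin m) (Fin m) (MvPolynomial (Fin n) ℝ)) +
        ∑ i, (X i : MvPolynomial (Fin n) ℝ) • (B i).map C) := by
  have hPSD : (-A).PosSemidef := .of_dotProduct_mulVec_nonneg
    (by rw [IsHermitian, conjTranspose_eq_transpose_of_trivial, transpose_neg, hA])
    fun v => by simpa [neg_mulVec] using hNSD v
  obtain ⟨S, hS⟩ := hPSD.exists_eq_conjTranspose_mul_self
  rw [conjTranspose_eq_transpose_of_trivial] at hS
  refine ⟨n + 1, le_rfl, fun i => reindex finSumFinEquiv finSumFinEquiv (arrowhead (Sᵀ i) (b i)),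
    fun i => (isSymm_arrowhead _ _).submatrix _, ?_⟩
  rw [det_one_add_sum_X_smul_reindex, one_add_sum_X_smul_arrowhead_map, det_one_add_arrowhead,
    mulVec_dotProduct_mulVec_self, ← transpose_map, ← Matrix.map_mul, ← hS,
    dotProduct_mulVec_self_eq_sum_sum]
  simp only [map_apply, Matrix.neg_apply, map_neg, neg_mul, Finset.sum_neg_distrib]
  ring
end

section
/- Let $d_1,\dots,d_n$ be real numbers and let $M$ be the $n\times n$ real matrix whose $(k,i)$ entry, for $0 \le k \le n-1$ and $1 \le i \le n$, is $e_k(d_1,\dots,\widehat{d_i},\dots,d_n)$, the elementary symmetric polynomial of degree $k$ evaluated at the $n-1$ values $d_j$, $j \neq i$. Then $M$ is invertible if and only if the $d_1,\dots,d_n$ are pairwise distinct. -/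
/-!
Column `i` of the matrix lists, up to the signs `(-1)ᵏ`, the coefficients of
`pᵢ = ∏_{l ≠ i} (X - d_l)`. Evaluating these polynomials at the points `d_j` turns the matrix into
the diagonal matrix with entries `pᵢ(dᵢ) = ∏_{l ≠ i} (dᵢ - d_l)`, which are nonzero when the `d_j`
are distinct. Conversely, if `d_a = d_b` with `a ≠ b`, columns `a` and `b` are equal.
-/

open Finset Polynomial

theorem prod_sub_eq_sum_esymm {R ι : Type*} [CommRing R] (s : Finset ι) (f : ι → R) (x : R) :
    ∏ l ∈ s, (x - f l) =
      ∑ k ∈ range (#s + 1), (-1) ^ k * (∑ t ∈ s.powersetCard k, ∏ j ∈ t, f j) * x ^ (#s - k) := by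
  have h := congrArg (eval x) (s.val.map f).prod_X_sub_X_eq_sum_esymm
  simp only [eval_multiset_prod, Multiset.map_map, Function.comp_def, eval_sub, eval_X, eval_C,
    eval_finsetSum, eval_mul, eval_pow, eval_neg, eval_one, Multiset.card_map,
    Finset.esymm_map_val] at h
  simpa [mul_assoc] using h

def esymmComplMatrix {R : Type*} [CommSemiring R] {n : ℕ} (d : Fin n → R) :
    Matrix (Fin n) (Fin n) R :=
  Matrix.of fun k i => ∑ S ∈ powersetCard k (univ.erase i), ∏ j ∈ S, d j

section

variable {R : Type*} {n : ℕ}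

theorem esymmComplMatrix_apply_eq_of_eq [CommSemiring R] {d : Fin n → R} {a b : Fin n}
    (hab : d a = d b) (k : Fin n) : esymmComplMatrix d k a = esymmComplMatrix d k b := by
  classical
  have hmap : (univ.erase a).val.map d = (univ.erase b).val.map d := by
    rw [erase_val, erase_val, Multiset.map_erase_of_mem d _ (mem_univ_val a),
      Multiset.map_erase_of_mem d _ (mem_univ_val b), hab]
  simp only [esymmComplMatrix, Matrix.of_apply, ← esymm_map_val, hmap]

theorem det_esymmComplMatrix_eq_zero [CommRing R] {d : Fin n → R}
    (hd : ¬Function.Injective d) : (esymmComplMatrix d).det = 0 := by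
  obtain ⟨a, b, hab, hne⟩ := Function.not_injective_iff.mp hd
  exact Matrix.det_zero_of_column_eq hne (esymmComplMatrix_apply_eq_of_eq hab)

theorem signedPowMatrix_mul_esymmComplMatrix [CommRing R] (d : Fin n → R) :
    Matrix.of (fun j k : Fin n => (-1) ^ (k : ℕ) * d j ^ (n - 1 - k)) * esymmComplMatrix d =
      Matrix.diagonal fun i => ∏ l ∈ univ.erase i, (d i - d l) := by
  ext j i
  have hcard : #(univ.erase i) = n - 1 := by simp
  have hentry : (Matrix.of (fun j k : Fin n => (-1) ^ (k : ℕ) * d j ^ (n - 1 - k)) *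
      esymmComplMatrix d) j i = ∏ l ∈ univ.erase i, (d j - d l) := by
    rw [prod_sub_eq_sum_esymm, hcard, Nat.sub_add_cancel i.pos, ← Fin.sum_univ_eq_sum_range]
    simp only [Matrix.mul_apply, Matrix.of_apply, esymmComplMatrix]
    exact sum_congr rfl fun k _ => by ring
  rw [hentry]
  rcases eq_or_ne j i with rfl | hji
  · rw [Matrix.diagonal_apply_eq]
  · rw [Matrix.diagonal_apply_ne _ hji]
    exact prod_eq_zero (mem_erase.mpr ⟨hji, mem_univ j⟩) (sub_self _)

theorem det_esymmComplMatrix_ne_zero [CommRing R] [IsDomain R] {d : Fin n → R}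
    (hd : Function.Injective d) : (esymmComplMatrix d).det ≠ 0 := by
  have hdiag : ∏ i, ∏ l ∈ univ.erase i, (d i - d l) ≠ 0 :=
    prod_ne_zero_iff.mpr fun i _ => prod_ne_zero_iff.mpr fun l hl =>
      sub_ne_zero.mpr (hd.ne (mem_erase.mp hl).1.symm)
  have hdet := congrArg Matrix.det (signedPowMatrix_mul_esymmComplMatrix d)
  rw [Matrix.det_mul, Matrix.det_diagonal] at hdet
  exact right_ne_zero_of_mul (hdet ▸ hdiag)

theorem det_esymmComplMatrix_ne_zero_iff [CommRing R] [IsDomain R] (d : Fin n → R) :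
    (esymmComplMatrix d).det ≠ 0 ↔ Function.Injective d :=
  ⟨not_imp_comm.mp det_esymmComplMatrix_eq_zero, det_esymmComplMatrix_ne_zero⟩

end

/-- The matrix `M` with entries `M (k, i) = e_k(d₁,…,d̂ᵢ,…,dₙ)` (the elementary
symmetric polynomial of degree `k`, `0 ≤ k ≤ n-1`, of the values `d_j`, `j ≠ i`)
is invertible iff the `d₁,…,dₙ` are pairwise distinct. -/
theorem esymm_matrix_invertible_iff (n : ℕ) (d : Fin n → ℝ) :
    IsUnit (Matrix.of fun k i : Fin n =>
        ∑ S ∈ Finset.powersetCard (k : ℕ) (Finset.univ.erase i), ∏ j ∈ S, d j) ↔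
      Function.Injective d := by
  rw [Matrix.isUnit_iff_isUnit_det, isUnit_iff_ne_zero]
  exact det_esymmComplMatrix_ne_zero_iff d
end
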